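/- Characterization of cardinality bounds: for every natural number k, a generalized causal team T satisfies the formula χ_k (the k-fold tensor disjunction of χ) if and only if the quotient T/≈ has at most k elements; and a causal team T satisfies χ_k iff |T⁻| ≤ k. -/

import Mathlib

namespace CausalTeams

attribute [local instance] Classical.propDecidable

/-- A system of functions over a signature: each endogenous variable `V ∈ En` has a set
of parents `PA V` (not containing `V`) and a function computing its value, which depends
only on the values of its parents. -/
structure FuncSystem (Var : Type) (Val : Var → Type) : Type where
  En : Set Var
  PA : Var → Set Var
  pa_ne : ∀ V, V ∉ PA V
  fn : ∀ V, (∀ W, Val W) → Val V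
  dep_only : ∀ V (s t : ∀ W, Val W), (∀ W ∈ PA V, s W = t W) → fn V s = fn V t

variable {Var : Type} {Val : Var → Type}

/-- Assignments of values to the variables. -/
abbrev Assign (Var : Type) (Val : Var → Type) : Type := ∀ V, Val V

/-- An assignment is compatible with a system of functions if each endogenous variable's
value is the one generated by its function. -/
def Compat (s : Assign Var Val) (F : FuncSystem Var Val) : Prop :=
  ∀ V ∈ F.En, s V = F.fn V s

/-- The endogenous variables whose generating function is constant. -/
def Cn (F : FuncSystem Var Val) : Set Var :=
  {V | V ∈ F.En ∧ ∀ s t : Assign Var Val, F.fn V s = F.fn V t}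

/-- The functions for `V` in `F` and `G` are equivalent up to dummy arguments: they agree
whenever their arguments agree on the common parents of `V`. -/
def fnEquiv (F G : FuncSystem Var Val) (V : Var) : Prop :=
  ∀ s t : Assign Var Val,
    (∀ W, W ∈ F.PA V → W ∈ G.PA V → s W = t W) → F.fn V s = G.fn V t

/-- Equivalence of systems of functions up to dummy arguments. -/
def sysEquiv (F G : FuncSystem Var Val) : Prop :=
  F.En \ Cn F = G.En \ Cn G ∧ ∀ V ∈ F.En \ Cn F, fnEquiv F G V

/-- The edge relation of the causal graph of `F`. -/
def Edge (F : FuncSystem Var Val) (W V : Var) : Prop := V ∈ F.En ∧ W ∈ F.PA V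

/-- `F` is recursive: its causal graph is acyclic. -/
def RecursiveSys (F : FuncSystem Var Val) : Prop :=
  ∀ V, ¬ Relation.TransGen (Edge F) V V

/-- The system of functions resulting from the intervention `do(X = x)`: the variables of
`X` are made exogenous; parents and functions of the remaining endogenous variables are kept. -/
def restrictSys (F : FuncSystem Var Val) (X : Finset Var) : FuncSystem Var Val where
  En := F.En \ ↑X
  PA := F.PA
  pa_ne := F.pa_ne
  fn := F.fn
  dep_only := F.dep_only

section InterveneAssign
variable [DecidableEq Var] [Fintype Var]

/-- One step of recomputation after the intervention `do(X = x)`. -/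
noncomputable def stepFn (F : FuncSystem Var Val) (X : Finset Var) (x : Assign Var Val)
    (s : Assign Var Val) : Assign Var Val :=
  fun V => if V ∈ X then x V else if V ∈ F.En then F.fn V s else s V

/-- The result of the intervention `do(X = x)` on the assignment `s`
(for recursive systems, iterating the recomputation step sufficiently many times
reaches the fixed point). -/
noncomputable def interveneAssign (F : FuncSystem Var Val) (X : Finset Var) (x : Assign Var Val)
    (s : Assign Var Val) : Assign Var Val :=
  (stepFn F X x)^[Fintype.card Var + 1] s

end InterveneAssign

/-- Formulas: equality atoms `V = v`, dependence atoms `=(Xs; Y)`, negation, conjunction,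
tensor disjunction, global disjunction, and interventionist counterfactuals
`X = x □→ φ` (the antecedent is a finite set of variables together with the values
imposed on them, read off from an assignment; such antecedents are always consistent). -/
inductive Formula (Var : Type) (Val : Var → Type) : Type where
  | eq : (V : Var) → Val V → Formula Var Val
  | dep : List Var → Var → Formula Var Val
  | neg : Formula Var Val → Formula Var Val
  | and : Formula Var Val → Formula Var Val → Formula Var Val
  | or : Formula Var Val → Formula Var Val → Formula Var Val
  | gor : Formula Var Val → Formula Var Val → Formula Var Val
  | cf : Finset Var → Assign Var Val → Formula Var Val → Formula Var Val

/-- CO-formulas: no dependence atoms, no global disjunction. -/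
def IsCO : Formula Var Val → Prop
  | .eq _ _ => True
  | .dep _ _ => False
  | .neg φ => IsCO φ
  | .and φ ψ => IsCO φ ∧ IsCO ψ
  | .or φ ψ => IsCO φ ∧ IsCO ψ
  | .gor _ _ => False
  | .cf _ _ φ => IsCO φ

/-- COD-formulas: CO plus dependence atoms; negation applies only to CO-formulas. -/
def IsCOD : Formula Var Val → Prop
  | .eq _ _ => True
  | .dep _ _ => True
  | .neg φ => IsCO φ
  | .and φ ψ => IsCOD φ ∧ IsCOD ψ
  | .or φ ψ => IsCOD φ ∧ IsCOD ψ
  | .gor _ _ => False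
  | .cf _ _ φ => IsCOD φ

/-- CO_⤘-formulas: CO plus global disjunction; negation applies only to CO-formulas. -/
def IsCOglobal : Formula Var Val → Prop
  | .eq _ _ => True
  | .dep _ _ => False
  | .neg φ => IsCO φ
  | .and φ ψ => IsCOglobal φ ∧ IsCOglobal ψ
  | .or φ ψ => IsCOglobal φ ∧ IsCOglobal ψ
  | .gor φ ψ => IsCOglobal φ ∧ IsCOglobal ψ
  | .cf _ _ φ => IsCOglobal φ

/-- Counterfactual-free formulas: no occurrence of `□→`. -/
def CFFree : Formula Var Val → Prop
  | .eq _ _ => True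
  | .dep _ _ => True
  | .neg φ => CFFree φ
  | .and φ ψ => CFFree φ ∧ CFFree ψ
  | .or φ ψ => CFFree φ ∧ CFFree ψ
  | .gor φ ψ => CFFree φ ∧ CFFree ψ
  | .cf _ _ _ => False

section Semantics
variable [DecidableEq Var] [Fintype Var]

/-- Causal team semantics: satisfaction of a formula by a team of assignments together
with a system of functions. -/
noncomputable def csat : FuncSystem Var Val → Set (Assign Var Val) → Formula Var Val → Prop
  | _, T, .eq V v => ∀ s ∈ T, s V = v
  | _, T, .dep Xs Y => ∀ s ∈ T, ∀ t ∈ T, (∀ W ∈ Xs, s W = t W) → s Y = t Y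
  | F, T, .neg φ => ∀ s ∈ T, ¬ csat F {s} φ
  | F, T, .and φ ψ => csat F T φ ∧ csat F T ψ
  | F, T, .or φ ψ => ∃ T₁ T₂, T₁ ∪ T₂ = T ∧ csat F T₁ φ ∧ csat F T₂ ψ
  | F, T, .gor φ ψ => csat F T φ ∨ csat F T ψ
  | F, T, .cf X x φ => csat (restrictSys F X) (interveneAssign F X x '' T) φ

end Semantics

/-- Generalized causal teams: sets of pairs of an assignment and a system of functions. -/
abbrev GCT (Var : Type) (Val : Var → Type) : Type :=
  Set (Assign Var Val × FuncSystem Var Val)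

/-- The team component of a generalized causal team. -/
def teamOf (T : GCT Var Val) : Set (Assign Var Val) := Prod.fst '' T

/-- A genuine (recursive) generalized causal team: all pairs are compatible and all
function components are recursive. -/
def IsGCT (T : GCT Var Val) : Prop := ∀ p ∈ T, Compat p.1 p.2 ∧ RecursiveSys p.2

section GSemantics
variable [DecidableEq Var] [Fintype Var]

/-- Pointwise intervention on a generalized causal team. -/
noncomputable def gIntervene (T : GCT Var Val) (X : Finset Var) (x : Assign Var Val) : GCT Var Val :=
  (fun p => (interveneAssign p.2 X x p.1, restrictSys p.2 X)) '' T

/-- Generalized causal team semantics. -/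
noncomputable def gsat : GCT Var Val → Formula Var Val → Prop
  | T, .eq V v => ∀ p ∈ T, p.1 V = v
  | T, .dep Xs Y => ∀ p ∈ T, ∀ q ∈ T, (∀ W ∈ Xs, p.1 W = q.1 W) → p.1 Y = q.1 Y
  | T, .neg φ => ∀ p ∈ T, ¬ gsat {p} φ
  | T, .and φ ψ => gsat T φ ∧ gsat T ψ
  | T, .or φ ψ => ∃ T₁ T₂, T₁ ∪ T₂ = T ∧ gsat T₁ φ ∧ gsat T₂ ψ
  | T, .gor φ ψ => gsat T φ ∨ gsat T ψ
  | T, .cf X x φ => gsat (gIntervene T X x) φ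

end GSemantics

/-- Equivalence of generalized causal teams: for each system of functions `F`, the
assignments occurring together with a function component `∼`-similar to `F` are the same. -/
def gctEquiv (S T : GCT Var Val) : Prop :=
  ∀ F : FuncSystem Var Val,
    {s | ∃ G, (s, G) ∈ S ∧ sysEquiv G F} = {s | ∃ G, (s, G) ∈ T ∧ sysEquiv G F}

/-- `S ≼ T` iff `S ≈ R ⊆ T` for some `R`. -/
def sle (S T : GCT Var Val) : Prop := ∃ R : GCT Var Val, gctEquiv S R ∧ R ⊆ T

/-- The generalized causal team generated by a causal team. -/
def toGCT (team : Set (Assign Var Val)) (F : FuncSystem Var Val) : GCT Var Val :=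
  (fun s => (s, F)) '' team

/-- Equivalence of elements of generalized causal teams: same assignment and
`∼`-similar function components. -/
def pairEquiv (p q : Assign Var Val × FuncSystem Var Val) : Prop :=
  p.1 = q.1 ∧ sysEquiv p.2 q.2

/-- The quotient `T/≈` has at most `k` elements: `T` is covered by `k` representatives. -/
def quotCardLE (T : GCT Var Val) (k : ℕ) : Prop :=
  ∃ R : Finset (Assign Var Val × FuncSystem Var Val),
    R.card ≤ k ∧ ∀ p ∈ T, ∃ q ∈ R, pairEquiv p q

section Entailment
variable [DecidableEq Var] [Fintype Var]

/-- Entailment over (recursive) generalized causal teams. -/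
def gEntails (Δ : Set (Formula Var Val)) (α : Formula Var Val) : Prop :=
  ∀ T : GCT Var Val, IsGCT T → (∀ γ ∈ Δ, gsat T γ) → gsat T α

/-- Entailment over (recursive) causal teams. -/
def cEntails (Δ : Set (Formula Var Val)) (α : Formula Var Val) : Prop :=
  ∀ (F : FuncSystem Var Val) (team : Set (Assign Var Val)),
    RecursiveSys F → (∀ s ∈ team, Compat s F) →
    (∀ γ ∈ Δ, csat F team γ) → csat F team α

/-- Causal incompatibility of two formulas. -/
def Incompatible (φ ψ : Formula Var Val) : Prop :=
  ∀ (F G : FuncSystem Var Val) (S T : Set (Assign Var Val)),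
    S.Nonempty → T.Nonempty → RecursiveSys F → RecursiveSys G →
    (∀ s ∈ S, Compat s F) → (∀ t ∈ T, Compat t G) →
    csat F S φ → csat G T ψ → ¬ sysEquiv F G

end Entailment

section FormulaHelpers
variable [DecidableEq Var] [Fintype Var] [Nonempty Var]
  [∀ V, Fintype (Val V)] [∀ V, Nonempty (Val V)]

/-- The falsum formula `⊥ := V = v ∧ V ≠ v`. -/
noncomputable def falsum : Formula Var Val :=
  let V := Classical.arbitrary Var
  Formula.and (Formula.eq V (Classical.arbitrary (Val V)))
    (Formula.neg (Formula.eq V (Classical.arbitrary (Val V))))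

/-- Finite conjunction (the empty conjunction is `¬⊥`). -/
noncomputable def bigAnd : List (Formula Var Val) → Formula Var Val
  | [] => Formula.neg falsum
  | [φ] => φ
  | φ :: l => Formula.and φ (bigAnd l)

/-- Finite tensor disjunction (the empty disjunction is `⊥`). -/
noncomputable def bigOr : List (Formula Var Val) → Formula Var Val
  | [] => falsum
  | [φ] => φ
  | φ :: l => Formula.or φ (bigOr l)

/-- Finite global disjunction (the empty disjunction is `⊥`). -/
noncomputable def bigGor : List (Formula Var Val) → Formula Var Val
  | [] => falsum
  | [φ] => φ
  | φ :: l => Formula.gor φ (bigGor l)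

/-- The conjunction `⋀_{V ∈ Dom} V = s(V)` describing the assignment `s`. -/
noncomputable def eqConj (s : Assign Var Val) : Formula Var Val :=
  bigAnd ((Finset.univ : Finset Var).toList.map fun V => Formula.eq V (s V))

/-- `Θ^A := ⋁_{s ∈ A} ⋀_{V ∈ Dom} V = s(V)`. -/
noncomputable def Theta (A : Finset (Assign Var Val)) : Formula Var Val :=
  bigOr (A.toList.map eqConj)

/-- The constancy atom `=(V)`. -/
def conAtom (V : Var) : Formula Var Val := Formula.dep [] V

/-- `μ := ⋀_{V ∈ Dom} ⋀_{w} (W_V = w □→ =(V))` where `W_V = Dom \ {V}`. -/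
noncomputable def muForm : Formula Var Val :=
  bigAnd ((Finset.univ : Finset Var).toList.map fun V =>
    bigAnd (((Finset.univ : Finset (Assign Var Val))).toList.map fun w =>
      Formula.cf ((Finset.univ : Finset Var).erase V) w (conAtom V)))

/-- `χ := μ ∧ ⋀_{V ∈ Dom} =(V)`. -/
noncomputable def chiForm : Formula Var Val :=
  Formula.and muForm (bigAnd ((Finset.univ : Finset Var).toList.map conAtom))

/-- `χ_k`: the `k`-fold tensor disjunction of `χ` (with `χ_0 := ⊥`). -/
noncomputable def chiK : ℕ → Formula Var Val
  | 0 => falsum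
  | 1 => chiForm
  | n + 2 => Formula.or chiForm (chiK (n + 1))

end FormulaHelpers

/-! The constancy atoms in `χ` force all assignments of a team to coincide, and `μ` reads off
each function component by intervening on every variable but one: `do(Dom \ {V} = w)` sets `V`
to `F.fn V w` if `V` is endogenous and leaves it alone otherwise. For compatible pairs with the
same assignment, agreement of these responses for all `V` and `w` is exactly `∼`: a constant
function produces the same value as leaving `V` alone. So `χ` holds iff `|T/≈| ≤ 1`, and since
tensor disjunction splits a team as a union, `χ_k` holds iff `T` is covered by `k` classes.
A causal team `(team, F)` is the generalized team `toGCT team F`, on which both semantics agree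
and `≈` is equality of assignments. -/

section Equivalence

lemma sysEquiv_iff_forall_fn_eq {F G : FuncSystem Var Val} :
    sysEquiv F G ↔
      F.En \ Cn F = G.En \ Cn G ∧ ∀ V ∈ F.En \ Cn F, ∀ s, F.fn V s = G.fn V s := by
  refine ⟨fun ⟨hEn, hfn⟩ => ⟨hEn, fun V hV s => hfn V hV s s fun _ _ _ => rfl⟩,
    fun ⟨hEn, hfn⟩ => ⟨hEn, fun V hV s t hst => ?_⟩⟩
  let u : Assign Var Val := fun W => if W ∈ F.PA V then s W else t W
  calc F.fn V s = F.fn V u := F.dep_only V s u fun W hW => by simp [u, hW]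
    _ = G.fn V u := hfn V hV u
    _ = G.fn V t := G.dep_only V u t fun W hW => by
      by_cases hWF : W ∈ F.PA V
      · simpa [u, hWF] using hst W hWF hW
      · simp [u, hWF]

lemma sysEquiv_equivalence : Equivalence (sysEquiv (Var := Var) (Val := Val)) where
  refl _ := sysEquiv_iff_forall_fn_eq.2 ⟨rfl, fun _ _ _ => rfl⟩
  symm h := by
    rw [sysEquiv_iff_forall_fn_eq] at h ⊢
    exact ⟨h.1.symm, fun V hV s => (h.2 V (h.1 ▸ hV) s).symm⟩
  trans h₁ h₂ := by
    rw [sysEquiv_iff_forall_fn_eq] at h₁ h₂ ⊢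
    exact ⟨h₁.1.trans h₂.1, fun V hV s => (h₁.2 V hV s).trans (h₂.2 V (h₁.1 ▸ hV) s)⟩

lemma pairEquiv_equivalence : Equivalence (pairEquiv (Var := Var) (Val := Val)) where
  refl _ := ⟨rfl, sysEquiv_equivalence.refl _⟩
  symm h := ⟨h.1.symm, sysEquiv_equivalence.symm h.2⟩
  trans h₁ h₂ := ⟨h₁.1.trans h₂.1, sysEquiv_equivalence.trans h₁.2 h₂.2⟩

end Equivalence

/-- The value of `V` after the intervention `do(Dom \ {V} = w)` on `s`. -/
noncomputable def FuncSystem.respond (F : FuncSystem Var Val) (s : Assign Var Val) (V : Var)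
    (w : Assign Var Val) : Val V :=
  if V ∈ F.En then F.fn V w else s V

namespace FuncSystem

variable {F G : FuncSystem Var Val} {s : Assign Var Val} {V : Var}

lemma respond_of_mem_En (hV : V ∈ F.En) (w : Assign Var Val) : F.respond s V w = F.fn V w :=
  if_pos hV

lemma respond_eq_self_of_not_mem (hs : Compat s F) (hV : V ∉ F.En \ Cn F) (w : Assign Var Val) :
    F.respond s V w = s V := by
  unfold respond
  split_ifs with hEn
  · rw [hs V hEn, (not_not.1 fun hCn => hV ⟨hEn, hCn⟩).2 w s]
  · rfl

lemma mem_En_diff_Cn_iff_respond_nonconst :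
    V ∈ F.En \ Cn F ↔ ∃ w w', F.respond s V w ≠ F.respond s V w' := by
  by_cases hEn : V ∈ F.En
  · simp [respond, hEn, Cn]
  · simp [respond, hEn]

lemma sysEquiv_iff_respond_eq (hF : Compat s F) (hG : Compat s G) :
    sysEquiv F G ↔ ∀ V w, F.respond s V w = G.respond s V w := by
  constructor
  · intro h V w
    obtain ⟨hEn, hfn⟩ := sysEquiv_iff_forall_fn_eq.1 h
    by_cases hV : V ∈ F.En \ Cn F
    · rw [respond_of_mem_En hV.1, respond_of_mem_En (hEn ▸ hV).1, hfn V hV]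
    · rw [respond_eq_self_of_not_mem hF hV, respond_eq_self_of_not_mem hG (hEn ▸ hV)]
  · intro h
    have hEn : F.En \ Cn F = G.En \ Cn G := by
      ext V
      simp only [mem_En_diff_Cn_iff_respond_nonconst (s := s), h]
    refine sysEquiv_iff_forall_fn_eq.2 ⟨hEn, fun V hV w => ?_⟩
    rw [← respond_of_mem_En hV.1, ← respond_of_mem_En (hEn ▸ hV).1, h]

end FuncSystem

lemma pairEquiv_iff_respond_eq {p q : Assign Var Val × FuncSystem Var Val}
    (hp : Compat p.1 p.2) (hq : Compat q.1 q.2) :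
    pairEquiv p q ↔ p.1 = q.1 ∧ ∀ V w, p.2.respond p.1 V w = q.2.respond q.1 V w := by
  obtain ⟨s, F⟩ := p
  obtain ⟨t, G⟩ := q
  refine ⟨fun ⟨hst, h⟩ => ?_, fun ⟨hst, h⟩ => ?_⟩ <;> subst hst
  · exact ⟨rfl, (FuncSystem.sysEquiv_iff_respond_eq hp hq).1 h⟩
  · exact ⟨rfl, (FuncSystem.sysEquiv_iff_respond_eq hp hq).2 h⟩

section Intervention

variable [DecidableEq Var] [Fintype Var]

lemma interveneAssign_erase_self (F : FuncSystem Var Val) (V : Var) (w s : Assign Var Val) :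
    interveneAssign F (Finset.univ.erase V) w s V = F.respond s V w := by
  have hV : V ∉ Finset.univ.erase V := Finset.notMem_erase V _
  unfold interveneAssign FuncSystem.respond
  split_ifs with hEn
  · obtain ⟨n, hn⟩ := Nat.exists_eq_add_of_lt (Fintype.card_pos_iff.2 ⟨V⟩)
    rw [hn, Function.iterate_succ_apply', Function.iterate_succ_apply']
    simp only [stepFn, hV, hEn, if_false, if_true]
    refine F.dep_only V _ _ fun W hW => ?_
    have hWV : W ≠ V := ne_of_mem_of_not_mem hW (F.pa_ne V)
    simp [stepFn, hWV]
  · generalize Fintype.card Var + 1 = n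
    induction n with
    | zero => rfl
    | succ n ih => simp [Function.iterate_succ_apply', stepFn, hV, hEn, ih]

end Intervention

section QuotientCardinality

lemma quotCardLE_zero {T : GCT Var Val} : quotCardLE T 0 ↔ T = ∅ := by
  refine ⟨fun ⟨R, hR, hcov⟩ => ?_, fun hT => ⟨∅, le_rfl, by simp [hT]⟩⟩
  rw [Nat.le_zero, Finset.card_eq_zero] at hR
  subst hR
  simpa [Set.eq_empty_iff_forall_notMem] using hcov

lemma quotCardLE_one {T : GCT Var Val} :
    quotCardLE T 1 ↔ ∀ p ∈ T, ∀ q ∈ T, pairEquiv p q := by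
  constructor
  · rintro ⟨R, hR, hcov⟩ p hp q hq
    obtain ⟨r, hr, hpr⟩ := hcov p hp
    obtain ⟨r', hr', hqr'⟩ := hcov q hq
    rw [Finset.card_le_one.1 hR r hr r' hr'] at hpr
    exact pairEquiv_equivalence.trans hpr (pairEquiv_equivalence.symm hqr')
  · intro h
    rcases T.eq_empty_or_nonempty with rfl | ⟨p₀, hp₀⟩
    · exact ⟨∅, zero_le_one, by simp⟩
    · exact ⟨{p₀}, le_rfl, fun p hp => ⟨p₀, Finset.mem_singleton_self p₀, h p hp p₀ hp₀⟩⟩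

lemma _root_.Finset.exists_union_eq_of_card_le_add {α : Type*} [DecidableEq α] {R : Finset α}
    {m n : ℕ} (h : R.card ≤ m + n) :
    ∃ R₁ R₂ : Finset α, R₁ ∪ R₂ = R ∧ R₁.card ≤ m ∧ R₂.card ≤ n := by
  obtain ⟨R₁, hsub, hcard⟩ := Finset.exists_subset_card_eq (min_le_right m R.card)
  refine ⟨R₁, R \ R₁, Finset.union_sdiff_of_subset hsub, hcard ▸ min_le_left m _, ?_⟩
  rw [Finset.card_sdiff_of_subset hsub]
  omega

lemma quotCardLE_add {T : GCT Var Val} {m n : ℕ} :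
    quotCardLE T (m + n) ↔
      ∃ T₁ T₂ : GCT Var Val, T₁ ∪ T₂ = T ∧ quotCardLE T₁ m ∧ quotCardLE T₂ n := by
  constructor
  · rintro ⟨R, hR, hcov⟩
    obtain ⟨R₁, R₂, rfl, hR₁, hR₂⟩ := Finset.exists_union_eq_of_card_le_add hR
    refine ⟨{p ∈ T | ∃ q ∈ R₁, pairEquiv p q}, {p ∈ T | ∃ q ∈ R₂, pairEquiv p q}, ?_,
      ⟨R₁, hR₁, fun p hp => hp.2⟩, ⟨R₂, hR₂, fun p hp => hp.2⟩⟩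
    ext p
    simp only [Set.mem_union, Set.mem_ofPred_eq, ← and_or_left, ← exists_or, ← or_and_right,
      ← Finset.mem_union, and_iff_left_iff_imp]
    exact hcov p
  · rintro ⟨T₁, T₂, rfl, ⟨R₁, hR₁, hcov₁⟩, ⟨R₂, hR₂, hcov₂⟩⟩
    refine ⟨R₁ ∪ R₂, (Finset.card_union_le _ _).trans (by omega), ?_⟩
    rintro p (hp | hp)
    · obtain ⟨q, hq, hpq⟩ := hcov₁ p hp
      exact ⟨q, Finset.mem_union_left _ hq, hpq⟩
    · obtain ⟨q, hq, hpq⟩ := hcov₂ p hp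
      exact ⟨q, Finset.mem_union_right _ hq, hpq⟩

lemma quotCardLE_toGCT_iff {team : Set (Assign Var Val)} (hteam : team.Finite)
    (F : FuncSystem Var Val) {k : ℕ} : quotCardLE (toGCT team F) k ↔ team.ncard ≤ k := by
  constructor
  · rintro ⟨R, hR, hcov⟩
    have hsub : team ⊆ ↑(R.image Prod.fst) := fun s hs => by
      obtain ⟨q, hq, hsq, -⟩ := hcov (s, F) ⟨s, hs, rfl⟩
      exact Finset.mem_image.2 ⟨q, hq, hsq.symm⟩
    calc team.ncard ≤ (R.image Prod.fst : Set (Assign Var Val)).ncard :=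
          Set.ncard_le_ncard hsub (Finset.finite_toSet _)
      _ ≤ R.card := by rw [Set.ncard_coe_finset]; exact Finset.card_image_le
      _ ≤ k := hR
  · intro h
    refine ⟨hteam.toFinset.image (·, F), Finset.card_image_le.trans ?_, ?_⟩
    · rwa [← Set.ncard_eq_toFinset_card _ hteam]
    · rintro _ ⟨s, hs, rfl⟩
      exact ⟨(s, F), Finset.mem_image_of_mem _ (hteam.mem_toFinset.2 hs),
        pairEquiv_equivalence.refl _⟩

end QuotientCardinality

section Semantics

variable [DecidableEq Var] [Fintype Var]

lemma gIntervene_toGCT (team : Set (Assign Var Val)) (F : FuncSystem Var Val) (X : Finset Var)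
    (x : Assign Var Val) :
    gIntervene (toGCT team F) X x = toGCT (interveneAssign F X x '' team) (restrictSys F X) := by
  simp only [gIntervene, toGCT, Set.image_image]

lemma csat_iff_gsat_toGCT (φ : Formula Var Val) :
    ∀ (F : FuncSystem Var Val) (team : Set (Assign Var Val)),
      csat F team φ ↔ gsat (toGCT team F) φ := by
  induction φ with
  | eq V v => simp [csat, gsat, toGCT]
  | dep Xs Y => simp [csat, gsat, toGCT]
  | neg φ ih => simp [csat, gsat, toGCT, ih, Set.image_singleton]
  | and φ ψ ihφ ihψ => simp [csat, gsat, ihφ, ihψ]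
  | gor φ ψ ihφ ihψ => simp [csat, gsat, ihφ, ihψ]
  | cf X x φ ih => simp [csat, gsat, ih, gIntervene_toGCT]
  | or φ ψ ihφ ihψ =>
    intro F team
    simp only [csat, gsat, ihφ, ihψ]
    constructor
    · rintro ⟨T₁, T₂, rfl, h₁, h₂⟩
      exact ⟨_, _, (Set.image_union _ _ _).symm, h₁, h₂⟩
    · rintro ⟨S₁, S₂, hS, h₁, h₂⟩
      obtain ⟨T₁, -, rfl⟩ := Set.subset_image_iff.1 (hS ▸ Set.subset_union_left)
      obtain ⟨T₂, -, rfl⟩ := Set.subset_image_iff.1 (hS ▸ Set.subset_union_right)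
      refine ⟨T₁, T₂, (Prod.mk_left_injective F).image_injective ?_, h₁, h₂⟩
      rwa [Set.image_union]

lemma gsat_conAtom {T : GCT Var Val} {V : Var} :
    gsat T (conAtom V) ↔ ∀ p ∈ T, ∀ q ∈ T, p.1 V = q.1 V := by
  simp [conAtom, gsat]

section Chi

variable [Nonempty Var] [∀ V, Nonempty (Val V)]

lemma gsat_falsum {T : GCT Var Val} : gsat T (falsum : Formula Var Val) ↔ T = ∅ := by
  simp only [falsum, gsat, Set.mem_singleton_iff, forall_eq, Set.eq_empty_iff_forall_notMem]
  exact ⟨fun ⟨hV, hnV⟩ p hp => hnV p hp (hV p hp),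
    fun h => ⟨fun p hp => (h p hp).elim, fun p hp => (h p hp).elim⟩⟩

lemma gsat_bigAnd {T : GCT Var Val} :
    ∀ l : List (Formula Var Val), gsat T (bigAnd l) ↔ ∀ φ ∈ l, gsat T φ
  | [] => by simp [bigAnd, gsat, gsat_falsum]
  | [φ] => by simp [bigAnd]
  | φ :: ψ :: l => by
    simp only [bigAnd, gsat, gsat_bigAnd (ψ :: l), List.forall_mem_cons]

lemma gsat_bigAnd_map_univ {α : Type*} [Fintype α] {T : GCT Var Val}
    (f : α → Formula Var Val) :
    gsat T (bigAnd (Finset.univ.toList.map f)) ↔ ∀ a, gsat T (f a) := by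
  simp [gsat_bigAnd]

variable [∀ V, Fintype (Val V)]

lemma gsat_muForm {T : GCT Var Val} :
    gsat T (muForm : Formula Var Val) ↔
      ∀ V w, ∀ p ∈ T, ∀ q ∈ T, p.2.respond p.1 V w = q.2.respond q.1 V w := by
  simp only [muForm, gsat_bigAnd_map_univ, gsat, gsat_conAtom, gIntervene, Set.forall_mem_image,
    interveneAssign_erase_self]

lemma gsat_chiForm {T : GCT Var Val} (hT : ∀ p ∈ T, Compat p.1 p.2) :
    gsat T (chiForm : Formula Var Val) ↔ ∀ p ∈ T, ∀ q ∈ T, pairEquiv p q := by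
  change gsat T muForm ∧ gsat T (bigAnd _) ↔ _
  rw [gsat_muForm, gsat_bigAnd_map_univ]
  simp only [gsat_conAtom]
  constructor
  · rintro ⟨hmu, hcon⟩ p hp q hq
    exact (pairEquiv_iff_respond_eq (hT p hp) (hT q hq)).2
      ⟨funext fun V => hcon V p hp q hq, fun V w => hmu V w p hp q hq⟩
  · intro h
    refine ⟨fun V w p hp q hq => ?_, fun V p hp q hq => congrFun (h p hp q hq).1 V⟩
    exact ((pairEquiv_iff_respond_eq (hT p hp) (hT q hq)).1 (h p hp q hq)).2 V w

lemma gsat_chiK : ∀ (k : ℕ) {T : GCT Var Val}, (∀ p ∈ T, Compat p.1 p.2) →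
    (gsat T (chiK k) ↔ quotCardLE T k)
  | 0, _, _ => gsat_falsum.trans quotCardLE_zero.symm
  | 1, _, hT => (gsat_chiForm hT).trans quotCardLE_one.symm
  | n + 2, T, hT => by
    have hsplit := quotCardLE_add (T := T) (m := 1) (n := n + 1)
    rw [show 1 + (n + 1) = n + 2 by omega] at hsplit
    rw [hsplit]
    refine exists₂_congr fun T₁ T₂ => and_congr_right fun hT₁₂ => ?_
    subst hT₁₂
    exact and_congr (gsat_chiK 1 fun p hp => hT p (.inl hp))
      (gsat_chiK (n + 1) fun p hp => hT p (.inr hp))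

end Chi

end Semantics

/-- for every natural number k, a generalized causal team satisfies χ_k
iff its quotient by ≈ has at most k elements; a causal team satisfies χ_k iff its team
component has at most k assignments. -/
theorem chiK_characterizes_cardinality {Var : Type} [Fintype Var] [DecidableEq Var] [Nonempty Var]
    {Val : Var → Type} [∀ V, Fintype (Val V)] [∀ V, Nonempty (Val V)]
    (k : ℕ) :
    (∀ T : GCT Var Val, IsGCT T → (gsat T (chiK k) ↔ quotCardLE T k)) ∧
    (∀ (F : FuncSystem Var Val) (team : Set (Assign Var Val)),
        RecursiveSys F → (∀ s ∈ team, Compat s F) →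
        (csat F team (chiK k) ↔ team.ncard ≤ k)) := by
  refine ⟨fun T hT => gsat_chiK k fun p hp => (hT p hp).1, fun F team _ hcompat => ?_⟩
  have hcompat' : ∀ p ∈ toGCT team F, Compat p.1 p.2 := by
    rintro _ ⟨s, hs, rfl⟩
    exact hcompat s hs
  rw [csat_iff_gsat_toGCT, gsat_chiK k hcompat', quotCardLE_toGCT_iff team.toFinite]

end CausalTeams
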